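/- arXiv:2102.00571 — 2 statements merged into one kernel-verified Lean document; each statement's English description precedes it below -/
import Mathlib

section
/- Let K ⊂ ℝⁿ be a compact convex body with nonempty interior that is strictly convex, meaning that for every unit vector n there is a unique point y_n ∈ ∂K maximizing ⟨y, n⟩ over y ∈ K. Let F : ℝⁿ → ℝ be convex, let μ = e^{−|x|²/2} dx, and let ν = e^{−F} 1_K μ. Let φ : ℝⁿ → ℝ be a convex continuously differentiable function whose gradient map ∇φ pushes μ forward onto c·ν with c = μ(ℝⁿ)/ν(ℝⁿ). Then for every ε > 0 there exist δ > 0 and M > 0, independent of the direction, such that for every unit vector n and every x with |x| > M and |x/|x| − n| < δ, one has |∇φ(x) − y_n| < ε. In particular ∇φ(x) → y_n as |x| → ∞ with x/|x| → n, uniformly in n. -/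
open MeasureTheory Real RealInnerProductSpace Set Filter Topology

/-!
Monotonicity of `∇φ` gives `⟪∇φ x - ∇φ z, x - z⟫ ≥ 0`; dividing by `‖x‖` and letting `x → ∞`
in the direction `u` shows that every limit `p` of `∇φ x` satisfies `⟪∇φ z, u⟫ ≤ ⟪p, u⟫` for all
`z`. Since `∇φ` pushes a measure of full support onto a multiple of `ν`, whose support is `K`, the
closure of the range of `∇φ` is `K`; hence `p` maximizes `⟪·, u⟫` on `K`, so `p = y_u` by strict
convexity. Uniformity in `u` comes from compactness of the unit sphere and of `K`.
-/

theorem IsCompact.exists_tendsto_ultrafilter {X ι : Type*} [TopologicalSpace X] {s : Set X}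
    (hs : IsCompact s) (𝒰 : Ultrafilter ι) {f : ι → X} (hf : ∀ i, f i ∈ s) :
    ∃ x ∈ s, Tendsto f 𝒰 (𝓝 x) :=
  hs.ultrafilter_le_nhds' (𝒰.map f) (Ultrafilter.mem_map.2 (univ_mem' hf))

section Gradient

variable {E : Type*} [NormedAddCommGroup E] [InnerProductSpace ℝ E]

theorem ContDiff.continuous_gradient [CompleteSpace E] {φ : E → ℝ} (hφ : ContDiff ℝ 1 φ) :
    Continuous (gradient φ) :=
  (InnerProductSpace.toDual ℝ E).symm.continuous.comp (hφ.continuous_fderiv one_ne_zero)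

theorem ConvexOn.inner_gradient_le_inner_gradient [CompleteSpace E] {φ : E → ℝ}
    (hφ : ConvexOn ℝ univ φ) (hd : Differentiable ℝ φ) (a b : E) :
    ⟪gradient φ a, b - a⟫ ≤ ⟪gradient φ b, b - a⟫ := by
  have hline : ∀ t : ℝ, HasDerivAt (φ ∘ AffineMap.lineMap a b)
      ⟪gradient φ (AffineMap.lineMap a b t), b - a⟫ t := fun t => by
    simpa [InnerProductSpace.toDual_apply_apply, real_inner_comm] using
      (hd _).hasGradientAt.hasFDerivAt.comp_hasDerivAt t AffineMap.hasDerivAt_lineMap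
  have hmono := (hφ.comp_affineMap (AffineMap.lineMap a b)).monotoneOn_deriv
    (fun t _ => (hline t).differentiableAt) (mem_univ 0) (mem_univ 1) zero_le_one
  simpa [(hline _).deriv] using hmono

theorem ConvexOn.inner_gradient_le_of_tendsto [CompleteSpace E] {φ : E → ℝ}
    (hφ : ConvexOn ℝ univ φ) (hd : Differentiable ℝ φ) {ι : Type*} {l : Filter ι} [l.NeBot]
    {x : ι → E} {u p : E} (hx : Tendsto (fun i => ‖x i‖) l atTop)
    (hdir : Tendsto (fun i => ‖x i‖⁻¹ • x i) l (𝓝 u))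
    (hp : Tendsto (fun i => gradient φ (x i)) l (𝓝 p)) (z : E) :
    ⟪gradient φ z, u⟫ ≤ ⟪p, u⟫ := by
  set g := fun i => gradient φ (x i) - gradient φ z
  have hnonneg : ∀ i, 0 ≤ ⟪g i, ‖x i‖⁻¹ • x i⟫ - ‖x i‖⁻¹ * ⟪g i, z⟫ := fun i => by
    rw [real_inner_smul_right, ← mul_sub, ← inner_sub_right, inner_sub_left]
    exact mul_nonneg (inv_nonneg.2 (norm_nonneg _))
      (sub_nonneg.2 (hφ.inner_gradient_le_inner_gradient hd z (x i)))
  have hg : Tendsto g l (𝓝 (p - gradient φ z)) := hp.sub_const _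
  have hlim := (hg.inner hdir).sub
    ((tendsto_inv_atTop_zero.comp hx).mul (hg.inner (tendsto_const_nhds (x := z))))
  have := ge_of_tendsto' hlim hnonneg
  rwa [zero_mul, sub_zero, inner_sub_left, sub_nonneg] at this

theorem ConvexOn.norm_gradient_sub_lt_of_closure_range_eq [FiniteDimensional ℝ E] {φ : E → ℝ}
    {K : Set E} (hφ : ConvexOn ℝ univ φ) (hd : Differentiable ℝ φ) (hK : IsCompact K)
    (hrange : closure (range (gradient φ)) = K)
    (hstrict : ∀ u : E, ‖u‖ = 1 → ∃! y, y ∈ K ∧ ∀ z ∈ K, ⟪z, u⟫ ≤ ⟪y, u⟫) :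
    ∀ ε > (0 : ℝ), ∃ δ > (0 : ℝ), ∃ M > (0 : ℝ), ∀ u : E, ‖u‖ = 1 →
      ∀ y, (y ∈ K ∧ ∀ z ∈ K, ⟪z, u⟫ ≤ ⟪y, u⟫) →
      ∀ x, M < ‖x‖ → ‖(‖x‖⁻¹ • x) - u‖ < δ → ‖gradient φ x - y‖ < ε := by
  by_contra! hcon
  obtain ⟨ε, hε, hcon⟩ := hcon
  choose u hu y hy x hx hdir hfar using fun k : ℕ =>
    hcon (1 / ((k : ℝ) + 1)) (by positivity) ((k : ℝ) + 1) (by positivity)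
  -- Along an ultrafilter finer than `atTop`, sequences in compact sets converge: no subsequences.
  set 𝒰 := Ultrafilter.of (atTop : Filter ℕ)
  have h𝒰 : (𝒰 : Filter ℕ) ≤ atTop := Ultrafilter.of_le _
  obtain ⟨u₀, hu₀, hu_lim⟩ := (isCompact_sphere (0 : E) 1).exists_tendsto_ultrafilter 𝒰
    fun k => mem_sphere_zero_iff_norm.2 (hu k)
  obtain ⟨y₀, hy₀, hy_lim⟩ := hK.exists_tendsto_ultrafilter 𝒰 fun k => (hy k).1
  obtain ⟨p, hp, hp_lim⟩ := hK.exists_tendsto_ultrafilter 𝒰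
    fun k => hrange ▸ subset_closure (mem_range_self (x k))
  have hx_lim : Tendsto (fun k => ‖x k‖) 𝒰 atTop :=
    (tendsto_atTop_mono (fun k => (hx k).le)
      (tendsto_atTop_add_const_right _ 1 tendsto_natCast_atTop_atTop)).mono_left h𝒰
  have hdir_lim : Tendsto (fun k => ‖x k‖⁻¹ • x k) 𝒰 (𝓝 u₀) := by
    have : Tendsto (fun k => ‖x k‖⁻¹ • x k - u k) 𝒰 (𝓝 0) := squeeze_zero_norm
      (fun k => (hdir k).le) (tendsto_one_div_add_atTop_nhds_zero_nat.mono_left h𝒰)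
    simpa using this.add hu_lim
  have hp_max : ∀ z ∈ K, ⟪z, u₀⟫ ≤ ⟪p, u₀⟫ := by
    have hsub : range (gradient φ) ⊆ {w | ⟪w, u₀⟫ ≤ ⟪p, u₀⟫} := by
      rintro _ ⟨w, rfl⟩
      exact hφ.inner_gradient_le_of_tendsto hd hx_lim hdir_lim hp_lim w
    have hclosed : IsClosed {w | ⟪w, u₀⟫ ≤ ⟪p, u₀⟫} := isClosed_le (by fun_prop) continuous_const
    rw [← hrange]
    exact fun z hz => closure_minimal hsub hclosed hz
  have hy₀_max : ∀ z ∈ K, ⟪z, u₀⟫ ≤ ⟪y₀, u₀⟫ := fun z hz =>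
    le_of_tendsto_of_tendsto' (tendsto_const_nhds.inner hu_lim) (hy_lim.inner hu_lim)
      fun k => (hy k).2 z hz
  have hεp : ε ≤ ‖p - y₀‖ := ge_of_tendsto' (hp_lim.sub hy_lim).norm hfar
  rw [(hstrict u₀ (mem_sphere_zero_iff_norm.1 hu₀)).unique ⟨hp, hp_max⟩ ⟨hy₀, hy₀_max⟩,
    sub_self, norm_zero] at hεp
  exact hε.not_ge hεp

end Gradient

section Support

variable {Y : Type*} [TopologicalSpace Y] [MeasurableSpace Y]

theorem closure_range_eq_support_of_pushforward {X : Type*} [TopologicalSpace X]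
    [MeasurableSpace X] [Nonempty X] [OpensMeasurableSpace Y] [HereditarilyLindelofSpace Y]
    {μ : Measure X} [μ.IsOpenPosMeasure] {ν : Measure Y} {T : X → Y} {c : ENNReal}
    (hT : Continuous T) (hpush : ∀ E, MeasurableSet E → μ (T ⁻¹' E) = c * ν E) :
    closure (range T) = ν.support := by
  have hc : c ≠ 0 := by
    rintro rfl
    have := hpush univ MeasurableSet.univ
    rw [zero_mul, preimage_univ] at this
    exact isOpen_univ.measure_ne_zero μ univ_nonempty this
  refine (closure_minimal ?_ Measure.isClosed_support).antisymm
    fun y hy => mem_closure_iff.2 fun V hV hyV => ?_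
  · rintro _ ⟨x, rfl⟩
    by_contra hx
    refine (Measure.isOpen_compl_support.preimage hT).measure_ne_zero μ ⟨x, hx⟩ ?_
    rw [hpush _ Measure.isOpen_compl_support.measurableSet, Measure.measure_compl_support,
      mul_zero]
  · have hV0 : μ (T ⁻¹' V) ≠ 0 := by
      rw [hpush _ hV.measurableSet]
      exact mul_ne_zero hc ((Measure.mem_support_iff_forall y).1 hy V (hV.mem_nhds hyV)).ne'
    obtain ⟨x, hx⟩ := nonempty_of_measure_ne_zero hV0
    exact ⟨T x, hx, x, rfl⟩

theorem support_withDensity_eq (ρ : Measure Y) [ρ.IsOpenPosMeasure] {f : Y → ENNReal}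
    (hf : Measurable f) {K : Set Y} (hK : IsClosed K) (hKint : K ⊆ closure (interior K))
    (hf_zero : ∀ y ∉ K, f y = 0) (hf_pos : ∀ y ∈ interior K, f y ≠ 0) :
    (ρ.withDensity f).support = K := by
  refine (Measure.support_subset_of_isClosed hK ?_).antisymm fun y hy => ?_
  · exact (ae_withDensity_iff hf).2 (ae_of_all _ fun y hy => not_not.1 (mt (hf_zero y) hy))
  refine (Measure.mem_support_iff_forall y).2 fun U hU => pos_iff_ne_zero.2 ?_
  obtain ⟨z, hzU, hzK⟩ := mem_closure_iff_nhds.1 (hKint hy) _ (interior_mem_nhds.2 hU)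
  have hW : ρ (interior U ∩ interior K) ≠ 0 :=
    (isOpen_interior.inter isOpen_interior).measure_ne_zero ρ ⟨z, hzU, hzK⟩
  have hsub : interior U ∩ interior K ⊆ {w | f w ≠ 0} ∩ U :=
    fun w hw => ⟨hf_pos w hw.2, interior_subset hw.1⟩
  rw [ne_eq, withDensity_apply_eq_zero hf]
  exact fun h => hW (measure_mono_null hsub h)

end Support

/-- For a strictly convex compact body `K`, the Brenier map `∇φ` transporting the
Gaussian onto a log-concave measure supported on `K` converges, as `|x| → ∞` with
`x/|x| → n`, to the unique point of `∂K` with outward unit normal `n`, uniformly in the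
direction `n`. -/
theorem gradient_tends_to_normal_point {n : ℕ}
    (K : Set (EuclideanSpace ℝ (Fin n)))
    (hKcpt : IsCompact K) (hKconv : Convex ℝ K) (hKint : (interior K).Nonempty)
    (hstrict : ∀ u : EuclideanSpace ℝ (Fin n), ‖u‖ = 1 →
      ∃! y, y ∈ K ∧ ∀ z ∈ K, ⟪z, u⟫ ≤ ⟪y, u⟫)
    (F : EuclideanSpace ℝ (Fin n) → ℝ) (hF : ConvexOn ℝ Set.univ F)
    (μ ν : Measure (EuclideanSpace ℝ (Fin n)))
    (hμ : μ = volume.withDensity fun x => ENNReal.ofReal (Real.exp (-‖x‖ ^ 2 / 2)))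
    (hν : ν = volume.withDensity fun x =>
      ENNReal.ofReal
        (Set.indicator K (fun y => Real.exp (-F y) * Real.exp (-‖y‖ ^ 2 / 2)) x))
    (φ : EuclideanSpace ℝ (Fin n) → ℝ)
    (hφconv : ConvexOn ℝ Set.univ φ) (hφC1 : ContDiff ℝ 1 φ)
    (hpush : ∀ E : Set (EuclideanSpace ℝ (Fin n)), MeasurableSet E →
      μ (gradient φ ⁻¹' E) = (μ Set.univ / ν Set.univ) * ν E) :
    ∀ ε > (0 : ℝ), ∃ δ > (0 : ℝ), ∃ M > (0 : ℝ),
      ∀ u : EuclideanSpace ℝ (Fin n), ‖u‖ = 1 →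
      ∀ y, (y ∈ K ∧ ∀ z ∈ K, ⟪z, u⟫ ≤ ⟪y, u⟫) →
      ∀ x, M < ‖x‖ → ‖(‖x‖⁻¹ • x) - u‖ < δ →
        ‖gradient φ x - y‖ < ε := by
  have hFc : Continuous F := hF.locallyLipschitz.continuous
  have hμpos : μ.IsOpenPosMeasure := hμ ▸ (withDensity_absolutelyContinuous' (by fun_prop)
    (ae_of_all _ fun x => (ENNReal.ofReal_pos.2 (exp_pos _)).ne')).isOpenPosMeasure
  have hsupp : ν.support = K := hν ▸ support_withDensity_eq volume
    (ENNReal.measurable_ofReal.comp ((by fun_prop : Measurable _).indicator hKcpt.measurableSet))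
    hKcpt.isClosed
    ((hKconv.closure_interior_eq_closure_of_nonempty_interior hKint).symm ▸ subset_closure)
    (fun x hx => by simp [indicator_of_notMem hx])
    (fun x hx => by
      simp only [Function.comp_apply, indicator_of_mem (interior_subset hx), ne_eq,
        ENNReal.ofReal_eq_zero, not_le]
      positivity)
  exact hφconv.norm_gradient_sub_lt_of_closure_range_eq (hφC1.differentiable one_ne_zero) hKcpt
    (hsupp ▸ closure_range_eq_support_of_pushforward hφC1.continuous_gradient hpush) hstrict
end

section
/- Fix a real number α > 0 and an integer n ≥ 1. For each integer N ≥ 2, let A_N = ∫ over r from √N − 1 to √N of (r^{2α} + r^{2α−2}) (1 − r²/N)^{N/2 − 1} r^{n−1} dr and B_N = ∫ over r from 0 to √N of r^{2α} (1 − r²/N)^{N/2 − 1} r^{n−1} dr. Then A_N / B_N → 0 as N → ∞. In particular, B_N converges to the positive limit ∫_0^∞ r^{2α + n − 1} e^{−r²/2} dr, while A_N tends to 0. -/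
/-!
On `0 ≤ r ≤ √N` the weight `(1 - r²/N)^(N/2 - 1)` is at most `e · exp(-r²/2)` (raise
`1 - x ≤ exp(-x)` to the power `N/2 - 1`) and tends to `exp(-r²/2)` pointwise. Hence both
integrals are dominated by a multiple of the integrable function `r^(2α+n-1) exp(-r²/2)`:
dominated convergence gives the limit of `B_N`, a positive Gamma value, while the band
`[√N - 1, √N]` escapes to infinity, so `A_N → 0` (on the band `r ≥ 1`, so that
`r^(2α-2) ≤ r^(2α)`).
-/

open MeasureTheory Real Filter Set Topology

noncomputable def sphereWeight (N : ℕ) (r : ℝ) : ℝ := (1 - r ^ 2 / N) ^ ((N : ℝ) / 2 - 1)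

lemma sphereWeight_nonneg {N : ℕ} {r : ℝ} (h : r ^ 2 ≤ N) : 0 ≤ sphereWeight N r := by
  rcases N.eq_zero_or_pos with rfl | hN
  · simp [sphereWeight]
  · exact rpow_nonneg (by rw [sub_nonneg, div_le_one (by positivity)]; exact h) _

lemma sphereWeight_le {N : ℕ} (hN : 2 ≤ N) {r : ℝ} (h : r ^ 2 ≤ N) :
    sphereWeight N r ≤ exp 1 * exp (-r ^ 2 / 2) := by
  have hN0 : (0 : ℝ) < N := by positivity
  have hexp : 0 ≤ (N : ℝ) / 2 - 1 := by
    have : (2 : ℝ) ≤ N := by exact_mod_cast hN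
    linarith
  calc sphereWeight N r ≤ exp (-(r ^ 2 / N)) ^ ((N : ℝ) / 2 - 1) :=
        rpow_le_rpow (by rw [sub_nonneg, div_le_one hN0]; exact h) (one_sub_le_exp_neg _) hexp
    _ = exp (r ^ 2 / N - r ^ 2 / 2) := by rw [← exp_mul]; field_simp; ring_nf
    _ ≤ exp (1 + -r ^ 2 / 2) := exp_le_exp.2 (by
        have : r ^ 2 / N ≤ 1 := (div_le_one hN0).2 h
        linarith)
    _ = exp 1 * exp (-r ^ 2 / 2) := exp_add _ _

lemma tendsto_sphereWeight (r : ℝ) :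
    Tendsto (fun N : ℕ => sphereWeight N r) atTop (𝓝 (exp (-r ^ 2 / 2))) := by
  have hlog : Tendsto (fun N : ℕ => (N : ℝ) * log (1 + -r ^ 2 / N)) atTop (𝓝 (-r ^ 2)) :=
    (tendsto_mul_log_one_add_div_atTop _).comp tendsto_natCast_atTop_atTop
  have hexp : Tendsto (fun N : ℕ => (1 / 2 - 1 / (N : ℝ)) * ((N : ℝ) * log (1 + -r ^ 2 / N)))
      atTop (𝓝 ((1 / 2 - 0) * -r ^ 2)) :=
    (tendsto_const_nhds.sub tendsto_one_div_atTop_nhds_zero_nat).mul hlog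
  have hpos : ∀ᶠ N : ℕ in atTop, 0 < 1 - r ^ 2 / N := by
    filter_upwards [tendsto_natCast_atTop_atTop.eventually_gt_atTop (r ^ 2),
      eventually_gt_atTop 0] with N hN hN0
    rw [sub_pos, div_lt_one (by positivity)]
    exact hN
  have hlim : (1 / 2 - 0) * -r ^ 2 = -r ^ 2 / 2 := by ring
  rw [hlim] at hexp
  refine ((continuous_exp.tendsto _).comp hexp).congr' ?_
  filter_upwards [hpos, eventually_gt_atTop 0] with N hN hN0
  have hN0' : (N : ℝ) ≠ 0 := by positivity
  rw [Function.comp_apply, sphereWeight, rpow_def_of_pos hN, neg_div, ← sub_eq_add_neg]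
  congr 1
  field_simp

lemma integrableOn_rpow_mul_exp_neg_sq_div_two {p : ℝ} (hp : -1 < p) :
    IntegrableOn (fun r : ℝ => r ^ p * exp (-r ^ 2 / 2)) (Ioi 0) := by
  simpa [neg_div, div_eq_inv_mul] using
    integrableOn_rpow_mul_exp_neg_mul_sq (b := 1 / 2) (by norm_num) hp

lemma integral_rpow_mul_exp_neg_sq_div_two_pos {p : ℝ} (hp : -1 < p) :
    0 < ∫ r in Ioi (0 : ℝ), r ^ p * exp (-r ^ 2 / 2) := by
  have h := integral_rpow_mul_exp_neg_mul_rpow two_pos hp (b := 1 / 2) (by norm_num)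
  simp only [rpow_two, neg_mul, one_div, inv_mul_eq_div, ← neg_div] at h
  rw [h]
  have : 0 < Gamma ((p + 1) / 2) := Gamma_pos_of_pos (by linarith)
  positivity

lemma rpow_mul_pow_pred {r a : ℝ} {n : ℕ} (hr : 0 ≤ r) (hn : 1 ≤ n) (h : a + n - 1 ≠ 0) :
    r ^ a * r ^ (n - 1) = r ^ (a + n - 1) := by
  rw [← rpow_natCast, Nat.cast_sub hn, Nat.cast_one,
    ← rpow_add' hr (by rwa [← add_sub_assoc])]
  ring_nf

lemma intervalIntegral_eq_setIntegral_Ioi_indicator {f : ℝ → ℝ} {a b : ℝ} (ha : 0 ≤ a)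
    (hab : a ≤ b) : ∫ r in a..b, f r = ∫ r in Ioi 0, (Ioc a b).indicator f r := by
  rw [intervalIntegral.integral_of_le hab, setIntegral_indicator measurableSet_Ioc,
    inter_eq_right.2 (Ioc_subset_Ioi_self.trans (Ioi_subset_Ioi ha))]

lemma tendsto_sqrt_natCast_atTop : Tendsto (fun N : ℕ => √(N : ℝ)) atTop atTop :=
  tendsto_sqrt_atTop.comp tendsto_natCast_atTop_atTop

section SphereWeightIntegrals

variable {f L : ℝ → ℝ} {p C : ℝ} {s : ℕ → Set ℝ}

theorem tendsto_setIntegral_indicator_mul_sphereWeight (hp : -1 < p) (hC : 0 ≤ C)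
    (hf : Measurable f) (hs : ∀ N, MeasurableSet (s N))
    (hs_sub : ∀ᶠ N in atTop, s N ⊆ Ioc 0 √N)
    (hf_le : ∀ᶠ N in atTop, ∀ r ∈ s N, |f r| ≤ C * r ^ p)
    (hL : ∀ r > 0, Tendsto (fun N => (s N).indicator (fun r => f r * sphereWeight N r) r)
      atTop (𝓝 (L r))) :
    Tendsto (fun N => ∫ r in Ioi 0, (s N).indicator (fun r => f r * sphereWeight N r) r)
      atTop (𝓝 (∫ r in Ioi 0, L r)) := by
  refine tendsto_integral_filter_of_dominated_convergence
    (fun r => C * exp 1 * (r ^ p * exp (-r ^ 2 / 2))) (.of_forall fun N => ?_) ?_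
    ((integrableOn_rpow_mul_exp_neg_sq_div_two hp).const_mul _)
    (ae_restrict_of_forall_mem measurableSet_Ioi hL)
  · exact ((hf.mul (by unfold sphereWeight; fun_prop)).indicator (hs N)).aestronglyMeasurable
  filter_upwards [hs_sub, hf_le, eventually_ge_atTop 2] with N hsub hfN hN
  refine ae_restrict_of_forall_mem measurableSet_Ioi fun r hr => ?_
  have hbound : 0 ≤ C * exp 1 * (r ^ p * exp (-r ^ 2 / 2)) := by
    have := rpow_pos_of_pos (mem_Ioi.1 hr) p
    positivity
  by_cases hrs : r ∈ s N
  · have hr2 : r ^ 2 ≤ N := (le_sqrt (le_of_lt hr) N.cast_nonneg).1 (hsub hrs).2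
    rw [indicator_of_mem hrs, norm_mul, Real.norm_of_nonneg (sphereWeight_nonneg hr2)]
    calc |f r| * sphereWeight N r ≤ C * r ^ p * (exp 1 * exp (-r ^ 2 / 2)) :=
          mul_le_mul (hfN r hrs) (sphereWeight_le hN hr2) (sphereWeight_nonneg hr2)
            ((abs_nonneg _).trans (hfN r hrs))
      _ = _ := by ring
  · rw [indicator_of_notMem hrs, norm_zero]
    exact hbound

theorem tendsto_integral_rpow_mul_sphereWeight (hp : -1 < p) :
    Tendsto (fun N : ℕ => ∫ r in 0..√N, r ^ p * sphereWeight N r) atTop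
      (𝓝 (∫ r in Ioi 0, r ^ p * exp (-r ^ 2 / 2))) := by
  have h := tendsto_setIntegral_indicator_mul_sphereWeight (f := fun r => r ^ p) (C := 1)
    (L := fun r => r ^ p * exp (-r ^ 2 / 2)) (s := fun N => Ioc 0 √N) hp zero_le_one
    (by fun_prop) (fun _ => measurableSet_Ioc)
    (.of_forall fun _ => subset_rfl) ?_ ?_
  · simpa only [intervalIntegral_eq_setIntegral_Ioi_indicator le_rfl (sqrt_nonneg _)] using h
  · exact .of_forall fun N r hr => by rw [one_mul, abs_of_pos (rpow_pos_of_pos hr.1 p)]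
  · intro r hr
    refine (tendsto_const_nhds.mul (tendsto_sphereWeight r)).congr' ?_
    filter_upwards [tendsto_sqrt_natCast_atTop.eventually_ge_atTop r] with N hN
    rw [indicator_of_mem (show r ∈ Ioc 0 √N from ⟨hr, hN⟩)]

theorem tendsto_integral_band_mul_sphereWeight (hp : -1 < p) (hC : 0 ≤ C) (hf : Measurable f)
    (hf_le : ∀ r, 1 ≤ r → |f r| ≤ C * r ^ p) :
    Tendsto (fun N : ℕ => ∫ r in √N - 1..√N, f r * sphereWeight N r) atTop (𝓝 0) := by
  have h := tendsto_setIntegral_indicator_mul_sphereWeight (L := fun _ => 0)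
    (s := fun N => Ioc (√N - 1) √N) hp hC hf (fun _ => measurableSet_Ioc) ?_ ?_ ?_
  · rw [integral_zero] at h
    refine h.congr' ?_
    filter_upwards [tendsto_sqrt_natCast_atTop.eventually_ge_atTop 1] with N hN
    exact (intervalIntegral_eq_setIntegral_Ioi_indicator (by linarith) (by linarith)).symm
  · filter_upwards [tendsto_sqrt_natCast_atTop.eventually_ge_atTop 1] with N hN
    exact Ioc_subset_Ioc_left (by linarith)
  · filter_upwards [tendsto_sqrt_natCast_atTop.eventually_ge_atTop 2] with N hN r hr
    exact hf_le r (by linarith [hr.1])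
  · intro r _
    refine tendsto_const_nhds.congr' ?_
    filter_upwards [tendsto_sqrt_natCast_atTop.eventually_ge_atTop (r + 1)] with N hN
    rw [indicator_of_notMem fun hr => by linarith [hr.1]]

end SphereWeightIntegrals

/-- The key cut-off estimate: the Gaussian-type weight `(1 - r²/N)^{N/2-1}` makes the
mass of the outer band `√N - 1 < r < √N` negligible compared with the full integral,
which converges to the corresponding Gaussian integral. -/
theorem cutoff_band_negligible (α : ℝ) (hα : 0 < α) (n : ℕ) (hn : 1 ≤ n)
    (A B : ℕ → ℝ)
    (hA : ∀ N : ℕ, 2 ≤ N → A N =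
      ∫ r in (Real.sqrt N - 1)..(Real.sqrt N),
        (r ^ (2 * α) + r ^ (2 * α - 2)) * (1 - r ^ 2 / N) ^ ((N : ℝ) / 2 - 1) *
          r ^ (n - 1))
    (hB : ∀ N : ℕ, 2 ≤ N → B N =
      ∫ r in (0 : ℝ)..(Real.sqrt N),
        r ^ (2 * α) * (1 - r ^ 2 / N) ^ ((N : ℝ) / 2 - 1) * r ^ (n - 1)) :
    Tendsto (fun N => A N / B N) atTop (nhds 0) ∧
    Tendsto B atTop
      (nhds (∫ r in Set.Ioi (0 : ℝ), r ^ (2 * α + (n : ℝ) - 1) * Real.exp (-r ^ 2 / 2))) ∧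
    0 < (∫ r in Set.Ioi (0 : ℝ), r ^ (2 * α + (n : ℝ) - 1) * Real.exp (-r ^ 2 / 2)) ∧
    Tendsto A atTop (nhds 0) := by
  have hn1 : (1 : ℝ) ≤ n := by exact_mod_cast hn
  have hp : -1 < 2 * α + (n : ℝ) - 1 := by linarith
  have hp0 : 2 * α + (n : ℝ) - 1 ≠ 0 := by linarith
  have hB_lim : Tendsto B atTop (𝓝 _) := (tendsto_integral_rpow_mul_sphereWeight hp).congr' <| by
    filter_upwards [eventually_ge_atTop 2] with N hN
    rw [hB N hN]
    refine intervalIntegral.integral_congr fun r hr => ?_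
    have hr0 : 0 ≤ r := by
      rw [uIcc_of_le (sqrt_nonneg _)] at hr
      exact hr.1
    rw [mul_right_comm, rpow_mul_pow_pred hr0 hn hp0, sphereWeight]
  have hf_le : ∀ r : ℝ, 1 ≤ r →
      |(r ^ (2 * α) + r ^ (2 * α - 2)) * r ^ (n - 1)| ≤ 2 * r ^ (2 * α + (n : ℝ) - 1) := by
    intro r hr
    have hle : r ^ (2 * α - 2) ≤ r ^ (2 * α) := rpow_le_rpow_of_exponent_le hr (by linarith)
    have : 0 ≤ r ^ (2 * α - 2) := rpow_nonneg (by linarith) _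
    rw [← rpow_mul_pow_pred (by linarith) hn hp0, abs_of_nonneg (by positivity)]
    nlinarith [pow_nonneg (show (0 : ℝ) ≤ r by linarith) (n - 1)]
  have hA_lim : Tendsto A atTop (𝓝 0) :=
    (tendsto_integral_band_mul_sphereWeight hp zero_le_two (by fun_prop) hf_le).congr' <| by
      filter_upwards [eventually_ge_atTop 2] with N hN
      rw [hA N hN]
      exact intervalIntegral.integral_congr fun r _ => by rw [sphereWeight]; ring
  have hpos := integral_rpow_mul_exp_neg_sq_div_two_pos hp
  have h_ratio := hA_lim.div hB_lim hpos.ne'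
  rw [zero_div] at h_ratio
  exact ⟨h_ratio, hB_lim, hpos, hA_lim⟩
end
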